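/- Let G be a bipartite multigraph in 𝒢_{0,m2} with m2 ≤ S_2·T_2/M². For a simple ordered 2-path (v1,v2,v3) of G with v2 ∈ Y and v1,v3 ∈ X, let b_d(G,(v1,v2,v3)) denote the number of simple ordered 2-paths (u,v,w) of G with v ∈ X and u,w ∈ Y, with {u,v,w} ∩ {v1,v2,v3} = ∅, such that v1u, v2v and v3w are non-edges. Then for every such simple ordered 2-path (v1,v2,v3), S_2·(1 − (4·m2·Δ + 4Δ² + 3Δ³)/S_2) ≤ b_d(G,(v1,v2,v3)) ≤ S_2, i.e. S_2 − 4·m2·Δ − 4Δ² − 3Δ³ ≤ b_d(G,(v1,v2,v3)) ≤ S_2. -/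
import Mathlib


open Finset

private lemma natlem (a b D : ℕ) (h : a + 2*b ≤ D) :
    (a+2*b)*((a+2*b)-1) ≤ a*(a-1) + 4*b*D := by
  rcases b with _ | b
  · simp
  rcases a with _ | a
  · simp only [Nat.zero_add, Nat.zero_mul, Nat.zero_add] at *
    calc 2*(b+1)*(2*(b+1)-1) ≤ 2*(b+1)*D := by
          apply Nat.mul_le_mul_left; omega
      _ ≤ 4*(b+1)*D := by apply Nat.mul_le_mul_right; omega
  · have h1 : (a+1) + 2*(b+1) - 1 = a + 2*(b+1) := by omega
    have h2 : (a+1) - 1 = a := by omega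
    rw [h1, h2]
    nlinarith

private lemma paircount {γ : Type*} [Fintype γ] [DecidableEq γ] (p : γ → Prop) [DecidablePred p] :
    ∑ u, ∑ w, (if u ≠ w ∧ p u ∧ p w then 1 else 0)
      = (univ.filter p).card * ((univ.filter p).card - 1) := by
  have hc : (univ.filter p).card * ((univ.filter p).card - 1)
      = ((univ.filter p).offDiag).card := by
    rw [Finset.offDiag_card]
    cases h : (univ.filter p).card <;> simp [Nat.succ_sub_one, Nat.mul_succ, Nat.succ_mul]
  rw [hc]
  have : (univ.filter p).offDiag
      = (univ.filter fun q : γ × γ => q.1 ≠ q.2 ∧ p q.1 ∧ p q.2) := by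
    ext q; simp [Finset.mem_offDiag]; tauto
  rw [this, Finset.card_filter]
  simp only [Fintype.sum_prod_type]

private lemma triple_count {α β γ : Type*} [Fintype α] [Fintype β] [Fintype γ]
    (P : α → Prop) (Q : α → β → Prop) (R : α → β → γ → Prop)
    [DecidablePred P] [∀ x, DecidablePred (Q x)] [∀ x y, DecidablePred (R x y)]
    {a b c : ℕ}
    (hP : (univ.filter P).card ≤ a)
    (hQ : ∀ x, (univ.filter (Q x)).card ≤ b)
    (hR : ∀ x y, (univ.filter (R x y)).card ≤ c) :
    (univ.filter fun tr : α × β × γ => P tr.1 ∧ Q tr.1 tr.2.1 ∧ R tr.1 tr.2.1 tr.2.2).card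
      ≤ a * (b * c) := by
  rw [Finset.card_filter]
  simp only [Fintype.sum_prod_type]
  have step1 : ∀ x y, (∑ z, if P x ∧ Q x y ∧ R x y z then 1 else 0)
      ≤ (if P x ∧ Q x y then c else 0) := by
    intro x y
    by_cases h : P x ∧ Q x y
    · simp only [h, true_and, if_true]
      calc (∑ z, if R x y z then 1 else 0) = (univ.filter (R x y)).card := by
            rw [Finset.card_filter]
        _ ≤ c := hR x y
    · simp only [h, if_false]
      have : ∀ z, (if P x ∧ Q x y ∧ R x y z then 1 else 0) = 0 := by
        intro z; split_ifs with h' <;> [exact absurd ⟨h'.1, h'.2.1⟩ h; rfl]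
      simp [this]
  calc ∑ x, ∑ y : β, ∑ z, (if P x ∧ Q x y ∧ R x y z then 1 else 0)
      ≤ ∑ x, ∑ y : β, (if P x ∧ Q x y then c else 0) := by
        apply Finset.sum_le_sum; intro x _; apply Finset.sum_le_sum; intro y _; exact step1 x y
    _ = ∑ x, (∑ y : β, if P x ∧ Q x y then 1 else 0) * c := by
        apply Finset.sum_congr rfl; intro x _
        rw [Finset.sum_mul]
        apply Finset.sum_congr rfl; intro y _
        split_ifs <;> simp
    _ ≤ ∑ x, (if P x then b else 0) * c := by
        apply Finset.sum_le_sum; intro x _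
        apply Nat.mul_le_mul_right
        by_cases h : P x
        · simp only [h, true_and, if_true]
          calc (∑ y, if Q x y then 1 else 0) = (univ.filter (Q x)).card := by
                rw [Finset.card_filter]
            _ ≤ b := hQ x
        · simp [h]
    _ = (∑ x, if P x then 1 else 0) * (b * c) := by
        rw [Finset.sum_mul]
        apply Finset.sum_congr rfl; intro x _
        split_ifs <;> ring
    _ ≤ a * (b * c) := by
        apply Nat.mul_le_mul_right
        rw [← Finset.card_filter]; exact hP

private lemma swap13_card {α β : Type*} [Fintype α] [Fintype β]
    (p : α → β → α → Prop) [∀ x y z, Decidable (p x y z)] :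
    (univ.filter fun tr : α × β × α => p tr.1 tr.2.1 tr.2.2).card
      = (univ.filter fun tr : α × β × α => p tr.2.2 tr.2.1 tr.1).card := by
  apply Finset.card_nbij' (fun tr => (tr.2.2, tr.2.1, tr.1)) (fun tr => (tr.2.2, tr.2.1, tr.1)) <;>
    intro a ha <;> simp at ha ⊢ <;> tauto

private lemma pullmid_card {α β : Type*} [Fintype α] [Fintype β]
    (p : α → β → α → Prop) [∀ x y z, Decidable (p x y z)] :
    (univ.filter fun tr : α × β × α => p tr.1 tr.2.1 tr.2.2).card
      = (univ.filter fun q : β × α × α => p q.2.1 q.1 q.2.2).card := by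
  apply Finset.card_nbij' (fun tr => (tr.2.1, tr.1, tr.2.2)) (fun q => (q.2.1, q.1, q.2.2)) <;>
    intro a ha <;> simp at ha ⊢ <;> tauto

private lemma card_union8 {α : Type*} [DecidableEq α] (a b c d e f g h : Finset α) :
    (a ∪ b ∪ c ∪ d ∪ e ∪ f ∪ g ∪ h).card
      ≤ a.card + b.card + c.card + d.card + e.card + f.card + g.card + h.card := by
  calc (a ∪ b ∪ c ∪ d ∪ e ∪ f ∪ g ∪ h).card
      ≤ (a ∪ b ∪ c ∪ d ∪ e ∪ f ∪ g).card + h.card := Finset.card_union_le _ _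
    _ ≤ ((a ∪ b ∪ c ∪ d ∪ e ∪ f).card + g.card) + h.card := by
        exact Nat.add_le_add_right (Finset.card_union_le _ _) _
    _ ≤ (((a ∪ b ∪ c ∪ d ∪ e).card + f.card) + g.card) + h.card := by
        exact Nat.add_le_add_right (Nat.add_le_add_right (Finset.card_union_le _ _) _) _
    _ ≤ ((((a ∪ b ∪ c ∪ d).card + e.card) + f.card) + g.card) + h.card := by
        exact Nat.add_le_add_right (Nat.add_le_add_right (Nat.add_le_add_right
          (Finset.card_union_le _ _) _) _) _
    _ ≤ (((((a ∪ b ∪ c).card + d.card) + e.card) + f.card) + g.card) + h.card := by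
        exact Nat.add_le_add_right (Nat.add_le_add_right (Nat.add_le_add_right
          (Nat.add_le_add_right (Finset.card_union_le _ _) _) _) _) _
    _ ≤ ((((((a ∪ b).card + c.card) + d.card) + e.card) + f.card) + g.card) + h.card := by
        exact Nat.add_le_add_right (Nat.add_le_add_right (Nat.add_le_add_right
          (Nat.add_le_add_right (Nat.add_le_add_right (Finset.card_union_le _ _) _) _) _) _) _
    _ ≤ (((((((a.card + b.card) + c.card) + d.card) + e.card) + f.card) + g.card) + h.card) := by
        exact Nat.add_le_add_right (Nat.add_le_add_right (Nat.add_le_add_right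
          (Nat.add_le_add_right (Nat.add_le_add_right (Nat.add_le_add_right
          (Finset.card_union_le _ _) _) _) _) _) _) _


/-- **Bipartite bounds on `b_d(G, (v1,v2,v3))`.**
`G` is a bipartite multigraph with parts `X = Fin m` (degrees `s`) and
`Y = Fin n` (degrees `t`), multiplicity function `mG`, exactly `m2` double
edges and no edge of multiplicity `≥ 3`, with `m2 ≤ S₂·T₂/M²`.  For a simple
ordered 2-path `(v1,v2,v3)` with `v2 ∈ Y`, `v1, v3 ∈ X`,
`b_d(G,(v1,v2,v3))` is the number of simple ordered 2-paths `(u,v,w)` with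
`v ∈ X`, `u, w ∈ Y`, `{u,v,w} ∩ {v1,v2,v3} = ∅`, such that `v1u`, `v2v`,
`v3w` are non-edges.  Then
`S₂ − 4·m2·Δ − 4Δ² − 3Δ³ ≤ b_d(G,(v1,v2,v3)) ≤ S₂`. -/
theorem bipartite_bd_path_bounds (m n : ℕ)
    (s : Fin m → ℕ) (t : Fin n → ℕ) (mG : Fin m → Fin n → ℕ)
    (M S2 T2 Δ m2 : ℕ)
    (hs : ∀ x, ∑ y, mG x y = s x)
    (ht : ∀ y, ∑ x, mG x y = t y)
    (hM : M = ∑ x, s x)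
    (hMt : M = ∑ y, t y)
    (hS2 : S2 = ∑ x, s x * (s x - 1))
    (hT2 : T2 = ∑ y, t y * (t y - 1))
    (hΔ : Δ = max (Finset.univ.sup s) (Finset.univ.sup t))
    (hmul : ∀ x y, mG x y ≤ 2)
    (hm2 : m2 = Set.ncard {q : Fin m × Fin n | mG q.1 q.2 = 2})
    (hm2le : (m2 : ℝ) ≤ (S2 : ℝ) * T2 / (M : ℝ) ^ 2)
    (v1 v3 : Fin m) (v2 : Fin n)
    (hdist : v1 ≠ v3)
    (hpath : mG v1 v2 = 1 ∧ mG v3 v2 = 1)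
    (bd1 : ℕ)
    (hbd1 : bd1 = Set.ncard {tr : Fin n × Fin m × Fin n |
      tr.1 ≠ tr.2.2 ∧ tr.1 ≠ v2 ∧ tr.2.2 ≠ v2 ∧ tr.2.1 ≠ v1 ∧ tr.2.1 ≠ v3 ∧
      mG tr.2.1 tr.1 = 1 ∧ mG tr.2.1 tr.2.2 = 1 ∧
      mG v1 tr.1 = 0 ∧ mG tr.2.1 v2 = 0 ∧ mG v3 tr.2.2 = 0}) :
    (S2 : ℝ) - 4 * m2 * Δ - 4 * Δ ^ 2 - 3 * Δ ^ 3 ≤ (bd1 : ℝ) ∧ bd1 ≤ S2 := by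
  -- degree bounds
  have hsle : ∀ v, s v ≤ Δ := fun v =>
    le_trans (Finset.le_sup (Finset.mem_univ v)) (hΔ ▸ le_max_left _ _)
  have htle : ∀ u, t u ≤ Δ := fun u =>
    le_trans (Finset.le_sup (Finset.mem_univ u)) (hΔ ▸ le_max_right _ _)
  -- row/column neighbour counts
  have hrow1 : ∀ v, (univ.filter fun y => mG v y = 1).card ≤ Δ := by
    intro v
    calc (univ.filter fun y => mG v y = 1).card
        = ∑ y, if mG v y = 1 then 1 else 0 := Finset.card_filter _ _
      _ ≤ ∑ y, mG v y := Finset.sum_le_sum (fun y _ => by split_ifs with h <;> omega)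
      _ = s v := hs v
      _ ≤ Δ := hsle v
  have hrowne : ∀ v, (univ.filter fun y => mG v y ≠ 0).card ≤ Δ := by
    intro v
    calc (univ.filter fun y => mG v y ≠ 0).card
        = ∑ y, if mG v y ≠ 0 then 1 else 0 := Finset.card_filter _ _
      _ ≤ ∑ y, mG v y := Finset.sum_le_sum (fun y _ => by split_ifs with h <;> omega)
      _ = s v := hs v
      _ ≤ Δ := hsle v
  have hcol1 : ∀ u, (univ.filter fun x => mG x u = 1).card ≤ Δ := by
    intro u
    calc (univ.filter fun x => mG x u = 1).card
        = ∑ x, if mG x u = 1 then 1 else 0 := Finset.card_filter _ _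
      _ ≤ ∑ x, mG x u := Finset.sum_le_sum (fun x _ => by split_ifs with h <;> omega)
      _ = t u := ht u
      _ ≤ Δ := htle u
  have hcolne : ∀ u, (univ.filter fun x => mG x u ≠ 0).card ≤ Δ := by
    intro u
    calc (univ.filter fun x => mG x u ≠ 0).card
        = ∑ x, if mG x u ≠ 0 then 1 else 0 := Finset.card_filter _ _
      _ ≤ ∑ x, mG x u := Finset.sum_le_sum (fun x _ => by split_ifs with h <;> omega)
      _ = t u := ht u
      _ ≤ Δ := htle u
  -- row decomposition : d1 + 2 d2 = s
  have hrow : ∀ v, (univ.filter fun y => mG v y = 1).card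
      + 2 * (univ.filter fun y => mG v y = 2).card = s v := by
    intro v
    have hpt : ∀ y : Fin n,
        mG v y = (if mG v y = 1 then 1 else 0) + 2 * (if mG v y = 2 then 1 else 0) := by
      intro y
      have h2 := hmul v y
      interval_cases h : (mG v y) <;> simp
    calc (univ.filter fun y => mG v y = 1).card
          + 2 * (univ.filter fun y => mG v y = 2).card
        = (∑ y, if mG v y = 1 then 1 else 0) + 2 * ∑ y, (if mG v y = 2 then 1 else 0) := by
          rw [Finset.card_filter, Finset.card_filter]
      _ = ∑ y, ((if mG v y = 1 then 1 else 0) + 2 * (if mG v y = 2 then 1 else 0)) := by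
          rw [Finset.sum_add_distrib, Finset.mul_sum]
      _ = ∑ y, mG v y := Finset.sum_congr rfl (fun y _ => (hpt y).symm)
      _ = s v := hs v
  -- m2 as a sum
  have hm2' : m2 = ∑ v, (univ.filter fun y => mG v y = 2).card := by
    rw [hm2]
    have hset : {q : Fin m × Fin n | mG q.1 q.2 = 2}
        = ↑(univ.filter fun q : Fin m × Fin n => mG q.1 q.2 = 2) := by
      ext q; simp
    rw [hset, Set.ncard_coe_finset, Finset.card_filter]
    simp only [Fintype.sum_prod_type]
    exact Finset.sum_congr rfl fun v _ => (Finset.card_filter _ _).symm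
  -- the sets
  set B : Finset (Fin n × Fin m × Fin n) := univ.filter (fun tr =>
    tr.1 ≠ tr.2.2 ∧ mG tr.2.1 tr.1 = 1 ∧ mG tr.2.1 tr.2.2 = 1) with hBdef
  set A : Finset (Fin n × Fin m × Fin n) := univ.filter (fun tr =>
    tr.1 ≠ tr.2.2 ∧ tr.1 ≠ v2 ∧ tr.2.2 ≠ v2 ∧ tr.2.1 ≠ v1 ∧ tr.2.1 ≠ v3 ∧
    mG tr.2.1 tr.1 = 1 ∧ mG tr.2.1 tr.2.2 = 1 ∧
    mG v1 tr.1 = 0 ∧ mG tr.2.1 v2 = 0 ∧ mG v3 tr.2.2 = 0) with hAdef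
  set C1 : Finset (Fin n × Fin m × Fin n) := univ.filter (fun tr =>
    tr.1 = v2 ∧ mG tr.2.1 tr.1 = 1 ∧ mG tr.2.1 tr.2.2 = 1) with hC1def
  set C2 : Finset (Fin n × Fin m × Fin n) := univ.filter (fun tr =>
    tr.2.2 = v2 ∧ mG tr.2.1 tr.2.2 = 1 ∧ mG tr.2.1 tr.1 = 1) with hC2def
  set C3 : Finset (Fin n × Fin m × Fin n) := univ.filter (fun tr =>
    tr.2.1 = v1 ∧ mG tr.2.1 tr.1 = 1 ∧ mG tr.2.1 tr.2.2 = 1) with hC3def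
  set C4 : Finset (Fin n × Fin m × Fin n) := univ.filter (fun tr =>
    tr.2.1 = v3 ∧ mG tr.2.1 tr.1 = 1 ∧ mG tr.2.1 tr.2.2 = 1) with hC4def
  set C5 : Finset (Fin n × Fin m × Fin n) := univ.filter (fun tr =>
    mG v1 tr.1 ≠ 0 ∧ mG tr.2.1 tr.1 = 1 ∧ mG tr.2.1 tr.2.2 = 1) with hC5def
  set C6 : Finset (Fin n × Fin m × Fin n) := univ.filter (fun tr =>
    mG tr.2.1 v2 ≠ 0 ∧ mG tr.2.1 tr.1 = 1 ∧ mG tr.2.1 tr.2.2 = 1) with hC6def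
  set C7 : Finset (Fin n × Fin m × Fin n) := univ.filter (fun tr =>
    mG v3 tr.2.2 ≠ 0 ∧ mG tr.2.1 tr.2.2 = 1 ∧ mG tr.2.1 tr.1 = 1) with hC7def
  -- B's cardinality
  have hBcard : B.card = ∑ v, (univ.filter fun y => mG v y = 1).card
      * ((univ.filter fun y => mG v y = 1).card - 1) := by
    rw [hBdef, Finset.card_filter]
    simp only [Fintype.sum_prod_type]
    rw [Finset.sum_comm]
    exact Finset.sum_congr rfl fun v _ => paircount (fun y => mG v y = 1)
  -- lower bound on |B|
  have hBlow : S2 ≤ B.card + 4 * Δ * m2 := by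
    rw [hBcard, hS2, hm2', Finset.mul_sum, ← Finset.sum_add_distrib]
    apply Finset.sum_le_sum
    intro v _
    have hv := hrow v
    have hle : (univ.filter fun y => mG v y = 1).card
        + 2 * (univ.filter fun y => mG v y = 2).card ≤ Δ := hv ▸ hsle v
    calc s v * (s v - 1)
        = ((univ.filter fun y => mG v y = 1).card + 2 * (univ.filter fun y => mG v y = 2).card)
          * (((univ.filter fun y => mG v y = 1).card
              + 2 * (univ.filter fun y => mG v y = 2).card) - 1) := by rw [hv]
      _ ≤ (univ.filter fun y => mG v y = 1).card * ((univ.filter fun y => mG v y = 1).card - 1)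
          + 4 * (univ.filter fun y => mG v y = 2).card * Δ := natlem _ _ _ hle
      _ = (univ.filter fun y => mG v y = 1).card * ((univ.filter fun y => mG v y = 1).card - 1)
          + 4 * Δ * (univ.filter fun y => mG v y = 2).card := by ring
  -- upper bound on |B|
  have hBup : B.card ≤ S2 := by
    rw [hBcard, hS2]
    apply Finset.sum_le_sum
    intro v _
    have hv := hrow v
    exact Nat.mul_le_mul (by omega) (by omega)
  -- bd1 as a finset card
  have hbd1' : bd1 = A.card := by
    rw [hbd1, hAdef]
    have hset : {tr : Fin n × Fin m × Fin n |
        tr.1 ≠ tr.2.2 ∧ tr.1 ≠ v2 ∧ tr.2.2 ≠ v2 ∧ tr.2.1 ≠ v1 ∧ tr.2.1 ≠ v3 ∧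
        mG tr.2.1 tr.1 = 1 ∧ mG tr.2.1 tr.2.2 = 1 ∧
        mG v1 tr.1 = 0 ∧ mG tr.2.1 v2 = 0 ∧ mG v3 tr.2.2 = 0}
        = ↑(univ.filter fun tr : Fin n × Fin m × Fin n =>
        tr.1 ≠ tr.2.2 ∧ tr.1 ≠ v2 ∧ tr.2.2 ≠ v2 ∧ tr.2.1 ≠ v1 ∧ tr.2.1 ≠ v3 ∧
        mG tr.2.1 tr.1 = 1 ∧ mG tr.2.1 tr.2.2 = 1 ∧
        mG v1 tr.1 = 0 ∧ mG tr.2.1 v2 = 0 ∧ mG v3 tr.2.2 = 0) := by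
      ext tr; simp
    rw [hset, Set.ncard_coe_finset]
  -- bounds on singleton-type filters
  have hfilv2 : (univ.filter fun u : Fin n => u = v2).card ≤ 1 := by
    simp [Finset.filter_eq']
  have hfilv1 : (univ.filter fun v : Fin m => v = v1).card ≤ 1 := by
    simp [Finset.filter_eq']
  have hfilv3 : (univ.filter fun v : Fin m => v = v3).card ≤ 1 := by
    simp [Finset.filter_eq']
  -- bounds on the seven bad sets
  have hC1 : C1.card ≤ 1 * (Δ * Δ) :=
    triple_count (fun u : Fin n => u = v2) (fun u (v : Fin m) => mG v u = 1)
      (fun _ v (w : Fin n) => mG v w = 1) hfilv2 hcol1 (fun _ v => hrow1 v)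
  have hC2 : C2.card ≤ 1 * (Δ * Δ) := by
    have he : C2.card = (univ.filter fun tr : Fin n × Fin m × Fin n =>
        tr.1 = v2 ∧ mG tr.2.1 tr.1 = 1 ∧ mG tr.2.1 tr.2.2 = 1).card :=
      swap13_card (fun (a : Fin n) (b : Fin m) (c : Fin n) =>
        c = v2 ∧ mG b c = 1 ∧ mG b a = 1)
    rw [he]
    exact triple_count (fun w : Fin n => w = v2) (fun w (v : Fin m) => mG v w = 1)
      (fun _ v (u : Fin n) => mG v u = 1) hfilv2 hcol1 (fun _ v => hrow1 v)
  have hC3 : C3.card ≤ 1 * (Δ * Δ) := by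
    have he : C3.card = (univ.filter fun q : Fin m × Fin n × Fin n =>
        q.1 = v1 ∧ mG q.1 q.2.1 = 1 ∧ mG q.1 q.2.2 = 1).card :=
      pullmid_card (fun (a : Fin n) (b : Fin m) (c : Fin n) =>
        b = v1 ∧ mG b a = 1 ∧ mG b c = 1)
    rw [he]
    exact triple_count (fun v : Fin m => v = v1) (fun v (u : Fin n) => mG v u = 1)
      (fun v _ (w : Fin n) => mG v w = 1) hfilv1 (fun v => hrow1 v) (fun v _ => hrow1 v)
  have hC4 : C4.card ≤ 1 * (Δ * Δ) := by
    have he : C4.card = (univ.filter fun q : Fin m × Fin n × Fin n =>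
        q.1 = v3 ∧ mG q.1 q.2.1 = 1 ∧ mG q.1 q.2.2 = 1).card :=
      pullmid_card (fun (a : Fin n) (b : Fin m) (c : Fin n) =>
        b = v3 ∧ mG b a = 1 ∧ mG b c = 1)
    rw [he]
    exact triple_count (fun v : Fin m => v = v3) (fun v (u : Fin n) => mG v u = 1)
      (fun v _ (w : Fin n) => mG v w = 1) hfilv3 (fun v => hrow1 v) (fun v _ => hrow1 v)
  have hC5 : C5.card ≤ Δ * (Δ * Δ) :=
    triple_count (fun u : Fin n => mG v1 u ≠ 0) (fun u (v : Fin m) => mG v u = 1)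
      (fun _ v (w : Fin n) => mG v w = 1) (hrowne v1) hcol1 (fun _ v => hrow1 v)
  have hC6 : C6.card ≤ Δ * (Δ * Δ) := by
    have he : C6.card = (univ.filter fun q : Fin m × Fin n × Fin n =>
        mG q.1 v2 ≠ 0 ∧ mG q.1 q.2.1 = 1 ∧ mG q.1 q.2.2 = 1).card :=
      pullmid_card (fun (a : Fin n) (b : Fin m) (c : Fin n) =>
        mG b v2 ≠ 0 ∧ mG b a = 1 ∧ mG b c = 1)
    rw [he]
    exact triple_count (fun v : Fin m => mG v v2 ≠ 0) (fun v (u : Fin n) => mG v u = 1)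
      (fun v _ (w : Fin n) => mG v w = 1) (hcolne v2) (fun v => hrow1 v) (fun v _ => hrow1 v)
  have hC7 : C7.card ≤ Δ * (Δ * Δ) := by
    have he : C7.card = (univ.filter fun tr : Fin n × Fin m × Fin n =>
        mG v3 tr.1 ≠ 0 ∧ mG tr.2.1 tr.1 = 1 ∧ mG tr.2.1 tr.2.2 = 1).card :=
      swap13_card (fun (a : Fin n) (b : Fin m) (c : Fin n) =>
        mG v3 c ≠ 0 ∧ mG b c = 1 ∧ mG b a = 1)
    rw [he]
    exact triple_count (fun w : Fin n => mG v3 w ≠ 0) (fun w (v : Fin m) => mG v w = 1)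
      (fun _ v (u : Fin n) => mG v u = 1) (hrowne v3) hcol1 (fun _ v => hrow1 v)
  -- covering of B
  have hcover : B ⊆ A ∪ C1 ∪ C2 ∪ C3 ∪ C4 ∪ C5 ∪ C6 ∪ C7 := by
    intro tr htr
    rw [hBdef] at htr
    simp only [Finset.mem_filter, Finset.mem_univ, true_and] at htr
    obtain ⟨h1, h2, h3⟩ := htr
    simp only [Finset.mem_union, hAdef, hC1def, hC2def, hC3def, hC4def, hC5def, hC6def,
      hC7def, Finset.mem_filter, Finset.mem_univ, true_and]
    by_cases e1 : tr.1 = v2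
    · exact Or.inl (Or.inl (Or.inl (Or.inl (Or.inl (Or.inl (Or.inr ⟨e1, h2, h3⟩))))))
    by_cases e2 : tr.2.2 = v2
    · exact Or.inl (Or.inl (Or.inl (Or.inl (Or.inl (Or.inr ⟨e2, h3, h2⟩)))))
    by_cases e3 : tr.2.1 = v1
    · exact Or.inl (Or.inl (Or.inl (Or.inl (Or.inr ⟨e3, h2, h3⟩))))
    by_cases e4 : tr.2.1 = v3
    · exact Or.inl (Or.inl (Or.inl (Or.inr ⟨e4, h2, h3⟩)))
    by_cases e5 : mG v1 tr.1 = 0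
    · by_cases e6 : mG tr.2.1 v2 = 0
      · by_cases e7 : mG v3 tr.2.2 = 0
        · exact Or.inl (Or.inl (Or.inl (Or.inl (Or.inl (Or.inl (Or.inl
            ⟨h1, e1, e2, e3, e4, h2, h3, e5, e6, e7⟩))))))
        · exact Or.inr ⟨e7, h3, h2⟩
      · exact Or.inl (Or.inr ⟨e6, h2, h3⟩)
    · exact Or.inl (Or.inl (Or.inr ⟨e5, h2, h3⟩))
  -- upper bound
  have hAsub : A ⊆ B := by
    rw [hAdef, hBdef]
    intro tr htr
    simp only [Finset.mem_filter, Finset.mem_univ, true_and] at htr ⊢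
    exact ⟨htr.1, htr.2.2.2.2.2.1, htr.2.2.2.2.2.2.1⟩
  have hup : bd1 ≤ S2 := by
    rw [hbd1']
    exact le_trans (Finset.card_le_card hAsub) hBup
  refine ⟨?_, hup⟩
  -- lower bound assembly over ℕ
  have h8 : B.card ≤ A.card + C1.card + C2.card + C3.card + C4.card + C5.card
      + C6.card + C7.card :=
    le_trans (Finset.card_le_card hcover) (card_union8 _ _ _ _ _ _ _ _)
  have hkey : S2 ≤ bd1 + 4 * Δ * m2 + 4 * (1 * (Δ * Δ)) + 3 * (Δ * (Δ * Δ)) := by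
    calc S2 ≤ B.card + 4 * Δ * m2 := hBlow
      _ ≤ (A.card + C1.card + C2.card + C3.card + C4.card + C5.card + C6.card + C7.card)
          + 4 * Δ * m2 := Nat.add_le_add_right h8 _
      _ ≤ (bd1 + 1 * (Δ * Δ) + 1 * (Δ * Δ) + 1 * (Δ * Δ) + 1 * (Δ * Δ)
          + Δ * (Δ * Δ) + Δ * (Δ * Δ) + Δ * (Δ * Δ)) + 4 * Δ * m2 := by
        refine Nat.add_le_add_right ?_ _
        have hA' : A.card ≤ bd1 := le_of_eq hbd1'.symm
        exact Nat.add_le_add (Nat.add_le_add (Nat.add_le_add (Nat.add_le_add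
          (Nat.add_le_add (Nat.add_le_add (Nat.add_le_add hA' hC1) hC2) hC3) hC4)
          hC5) hC6) hC7
      _ = bd1 + 4 * Δ * m2 + 4 * (1 * (Δ * Δ)) + 3 * (Δ * (Δ * Δ)) := by ring
  have hcast := (Nat.cast_le (α := ℝ)).2 hkey
  push_cast at hcast
  nlinarith [hcast]
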